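/- Let {i,j,k} be a skew-adjoint quaternion structure on V, let c₀, c₁, c₂, c₃ ∈ ℝ, set R := c₀R_Id + c₁R_i + c₂R_j + c₃R_k, and let x ∈ V with (x,x) = 1. Then the curvature operator R(x,ix) satisfies: R(x,ix)x = -(c₀+3c₁)·ix, R(x,ix)(ix) = (c₀+3c₁)·x, R(x,ix)(jx) = -(2c₁-c₂-c₃)·kx, R(x,ix)(kx) = (2c₁-c₂-c₃)·jx, and R(x,ix)y = -2c₁·iy for every y ∈ V orthogonal to each of x, ix, jx, kx. -/

import Mathlib

/-! Each tensor `R_φ(x, ix, z, ·)` is `B` applied to an explicit vector; with the quaternion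
relations this gives
`R(x, ix) z = (c₀ + c₁)((ix, z) x - (x, z) ix) + (c₂ + c₃)((jx, z) kx - (kx, z) jx) - 2 c₁ (x, x) iz`.
Since `x, ix, jx, kx` are orthonormal, evaluating at them and at vectors orthogonal to all four
gives the five formulas. -/

open Module

variable {V : Type*} [AddCommGroup V] [Module ℝ V] [FiniteDimensional ℝ V]

def IsSelfAdj (B : LinearMap.BilinForm ℝ V) (φ : V →ₗ[ℝ] V) : Prop :=
  ∀ x y : V, B (φ x) y = B x (φ y)

def IsSkewAdj (B : LinearMap.BilinForm ℝ V) (φ : V →ₗ[ℝ] V) : Prop :=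
  ∀ x y : V, B (φ x) y = - B x (φ y)

/-- The curvature tensor `R_φ` associated to a self-adjoint map `φ`. -/
def Rs (B : LinearMap.BilinForm ℝ V) (φ : V →ₗ[ℝ] V) : V → V → V → V → ℝ :=
  fun x y z w => B (φ y) z * B (φ x) w - B (φ x) z * B (φ y) w

/-- The curvature tensor `R_φ` associated to a skew-adjoint map `φ`. -/
def Ra (B : LinearMap.BilinForm ℝ V) (φ : V →ₗ[ℝ] V) : V → V → V → V → ℝ :=
  fun x y z w =>
    B (φ y) z * B (φ x) w - B (φ x) z * B (φ y) w - 2 * B (φ x) y * B (φ z) w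

def IsQuatStruct (B : LinearMap.BilinForm ℝ V) (i j k : V →ₗ[ℝ] V) : Prop :=
  IsSkewAdj B i ∧ IsSkewAdj B j ∧ IsSkewAdj B k ∧
  (∀ x : V, i (i x) = -x) ∧ (∀ x : V, j (j x) = -x) ∧ (∀ x : V, k (k x) = -x) ∧
  (∀ x : V, i (j x) = k x) ∧ (∀ x : V, j (i x) = - k x) ∧
  (∀ x : V, j (k x) = i x) ∧ (∀ x : V, k (j x) = - i x) ∧
  (∀ x : V, k (i x) = j x) ∧ (∀ x : V, i (k x) = - j x)

section

variable {E : Type*} [AddCommGroup E] [Module ℝ E] {B : LinearMap.BilinForm ℝ E}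

theorem Rs_eq_apply (φ : E →ₗ[ℝ] E) (x y z w : E) :
    Rs B φ x y z w = B (B (φ y) z • φ x - B (φ x) z • φ y) w := by
  simp only [Rs, map_sub, map_smul, LinearMap.sub_apply, LinearMap.smul_apply, smul_eq_mul]

theorem Ra_eq_apply (φ : E →ₗ[ℝ] E) (x y z w : E) :
    Ra B φ x y z w =
      B (B (φ y) z • φ x - B (φ x) z • φ y - (2 * B (φ x) y) • φ z) w := by
  simp only [Ra, map_sub, map_smul, LinearMap.sub_apply, LinearMap.smul_apply, smul_eq_mul]

namespace IsSkewAdj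

variable {φ ψ χ : E →ₗ[ℝ] E}

theorem neg (hφ : IsSkewAdj B φ) : IsSkewAdj B (-φ) := fun x y => by
  simp [hφ x y]

theorem apply_self_left (hsymm : ∀ x y : E, B x y = B y x) (hφ : IsSkewAdj B φ) (x : E) :
    B (φ x) x = 0 := by
  linarith [hφ x x, hsymm x (φ x)]

theorem apply_self_right (hsymm : ∀ x y : E, B x y = B y x) (hφ : IsSkewAdj B φ) (x : E) :
    B x (φ x) = 0 := by
  rw [hsymm, hφ.apply_self_left hsymm]

theorem apply_apply (hφ : IsSkewAdj B φ) (hφφ : ∀ x, φ (φ x) = -x) (x y : E) :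
    B (φ x) (φ y) = B x y := by
  rw [hφ, hφφ, map_neg, neg_neg]

theorem apply_orthogonal (hsymm : ∀ x y : E, B x y = B y x) (hφ : IsSkewAdj B φ)
    (hχ : IsSkewAdj B χ) {x : E} (h : φ (ψ x) = χ x) : B (φ x) (ψ x) = 0 := by
  rw [hφ, h, hχ.apply_self_right hsymm, neg_zero]

end IsSkewAdj

namespace IsQuatStruct

variable {i j k : E →ₗ[ℝ] E}

theorem pairwise_orthogonal (hsymm : ∀ x y : E, B x y = B y x) (hq : IsQuatStruct B i j k)
    (x : E) :
    B (i x) (j x) = 0 ∧ B (j x) (i x) = 0 ∧ B (j x) (k x) = 0 ∧ B (k x) (j x) = 0 ∧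
      B (k x) (i x) = 0 ∧ B (i x) (k x) = 0 := by
  obtain ⟨hi, hj, hk, -, -, -, hij, hji, hjk, hkj, hki, hik⟩ := hq
  exact ⟨hi.apply_orthogonal hsymm hk (hij x), hj.apply_orthogonal hsymm hk.neg (hji x),
    hj.apply_orthogonal hsymm hi (hjk x), hk.apply_orthogonal hsymm hi.neg (hkj x),
    hk.apply_orthogonal hsymm hj (hki x), hi.apply_orthogonal hsymm hj.neg (hik x)⟩

theorem curvature_self_i_apply (hsymm : ∀ x y : E, B x y = B y x) (hq : IsQuatStruct B i j k)
    (c₀ c₁ c₂ c₃ : ℝ) (x z w : E) :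
    c₀ * Rs B LinearMap.id x (i x) z w + c₁ * Ra B i x (i x) z w +
        c₂ * Ra B j x (i x) z w + c₃ * Ra B k x (i x) z w =
      B ((c₀ + c₁) • (B (i x) z • x - B x z • i x) +
          (c₂ + c₃) • (B (j x) z • k x - B (k x) z • j x) - (2 * c₁ * B x x) • i z) w := by
  obtain ⟨-, hBji, -, -, hBki, -⟩ := hq.pairwise_orthogonal hsymm x
  obtain ⟨hi, -, -, hii, -, -, -, hji, -, -, hki, -⟩ := hq
  simp only [Rs_eq_apply, Ra_eq_apply, LinearMap.id_apply, hii, hji, hki, hi.apply_apply hii,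
    hBji, hBki, map_add, map_sub, map_smul, map_neg, LinearMap.add_apply, LinearMap.sub_apply,
    LinearMap.smul_apply, LinearMap.neg_apply, smul_eq_mul]
  ring

end IsQuatStruct

/-- Explicit form of the curvature operator `R(x, ix)` of
`R := c₀ R_Id + c₁ R_i + c₂ R_j + c₃ R_k` on a unit spacelike vector `x`. -/
theorem quaternion_curvature_operator
    (B : LinearMap.BilinForm ℝ V)
    (hsymm : ∀ x y : V, B x y = B y x)
    (hnd : ∀ v : V, (∀ w : V, B v w = 0) → v = 0)
    (i j k : V →ₗ[ℝ] V) (hquat : IsQuatStruct B i j k)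
    (c₀ c₁ c₂ c₃ : ℝ)
    (x : V) (hx : B x x = 1)
    (A : V →ₗ[ℝ] V)
    (hA : ∀ z w : V, B (A z) w =
      c₀ * Rs B LinearMap.id x (i x) z w + c₁ * Ra B i x (i x) z w +
        c₂ * Ra B j x (i x) z w + c₃ * Ra B k x (i x) z w) :
    A x = (-(c₀ + 3 * c₁)) • i x ∧
      A (i x) = (c₀ + 3 * c₁) • x ∧
      A (j x) = (-(2 * c₁ - c₂ - c₃)) • k x ∧
      A (k x) = (2 * c₁ - c₂ - c₃) • j x ∧
      ∀ y : V, B x y = 0 → B (i x) y = 0 → B (j x) y = 0 → B (k x) y = 0 →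
        A y = (-(2 * c₁)) • i y := by
  have hB : Function.Injective B :=
    LinearMap.ker_eq_bot.mp (LinearMap.separatingLeft_iff_ker_eq_bot.mp hnd)
  have hA' (z : V) : A z = (c₀ + c₁) • (B (i x) z • x - B x z • i x) +
      (c₂ + c₃) • (B (j x) z • k x - B (k x) z • j x) - (2 * c₁) • i z := by
    refine hB (LinearMap.ext fun w => ?_)
    rw [hA, hquat.curvature_self_i_apply hsymm, hx, mul_one]
  obtain ⟨hBij, hBji, hBjk, hBkj, hBki, hBik⟩ := hquat.pairwise_orthogonal hsymm x
  obtain ⟨hi, hj, hk, hii, hjj, hkk, hij, -, -, -, -, hik⟩ := hquat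
  refine ⟨?_, ?_, ?_, ?_, fun y hy₀ hy₁ hy₂ hy₃ => by rw [hA', hy₀, hy₁, hy₂, hy₃]; module⟩ <;>
    simp only [hA', hx, hii, hij, hik, hi.apply_apply hii, hj.apply_apply hjj,
      hk.apply_apply hkk, hi.apply_self_left hsymm, hj.apply_self_left hsymm,
      hk.apply_self_left hsymm, hi.apply_self_right hsymm, hj.apply_self_right hsymm,
      hk.apply_self_right hsymm, hBij, hBji, hBjk, hBkj, hBki, hBik] <;>
    module
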